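/- Let S = [[1,0],[0,0]] and T(d) = [[d, √(d(1−d))],[√(d(1−d)), 1−d]]. For every 0 ≤ d < 1 there exists ε > 0 such that for all 0 < ε̃ < ε: ‖S − T(1/2 − ε̃)‖ > 1/√2 and ‖T(d) − T(1/2 − ε̃)‖ < 1/√2. -/

import Mathlib

/-- The operator norm (ℓ²→ℓ² norm) of a square matrix. -/
noncomputable def matOpNorm {n : Type*} [Fintype n] [DecidableEq n] {𝕜 : Type*} [RCLike 𝕜]
    (M : Matrix n n 𝕜) : ℝ :=
  ‖Matrix.toEuclideanCLM (𝕜 := 𝕜) M‖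

/-- The rank-one projection matrix `S = [[1,0],[0,0]]`. -/
noncomputable def Smat : Matrix (Fin 2) (Fin 2) ℝ := !![1, 0; 0, 0]

/-- The rank-one projection matrix `T(d) = [[d, √(d(1−d))],[√(d(1−d)), 1−d]]`. -/
noncomputable def Tmat (d : ℝ) : Matrix (Fin 2) (Fin 2) ℝ :=
  !![d, Real.sqrt (d * (1 - d)); Real.sqrt (d * (1 - d)), 1 - d]

/-!
For `a ∈ [0, 1]`, `T(a)` is the orthogonal projection onto the unit vector `u_a = (√a, √(1-a))`,
and `S = T(1)`. The difference of two such projections is a traceless symmetric matrix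
`[[p, q], [q, -p]]`, whose square is `(p² + q²) • 1`, so by the C⋆-identity
`‖T(a) - T(b)‖² = 1 - ⟨u_a, u_b⟩²`. Both inequalities thus compare an overlap `⟨u_·, u_b⟩²`
with `1/2` for `b = 1/2 - ε'`. For `S` the overlap is `b < 1/2`. For `T(d)` it is `1 - b > 1/2`
if `d = 0`, and otherwise it tends to `(1 + 2√(d(1-d)))/2 > 1/2` as `b → 1/2`.
-/

open Matrix Set

section OpNorm

variable {n 𝕜 : Type*} [Fintype n] [DecidableEq n] [RCLike 𝕜]

lemma matOpNorm_nonneg (M : Matrix n n 𝕜) : 0 ≤ matOpNorm M :=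
  norm_nonneg _

lemma matOpNorm_sq_of_conjTranspose_mul_self [Nonempty n] {M : Matrix n n 𝕜} {c : ℝ} (hc : 0 ≤ c)
    (h : Mᴴ * M = (c : 𝕜) • 1) :
    matOpNorm M ^ 2 = c := by
  have h' : star (toEuclideanCLM (𝕜 := 𝕜) M) * toEuclideanCLM (𝕜 := 𝕜) M = (c : 𝕜) • 1 := by
    rw [← map_star, ← map_mul, star_eq_conjTranspose, h, map_smul, map_one]
  rw [matOpNorm, sq, ← CStarRing.norm_star_mul_self, h', norm_smul, norm_one, mul_one,
    RCLike.norm_ofReal, abs_of_nonneg hc]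

end OpNorm

lemma matOpNorm_sq_traceless_symm (p q : ℝ) : matOpNorm !![p, q; q, -p] ^ 2 = p ^ 2 + q ^ 2 := by
  refine matOpNorm_sq_of_conjTranspose_mul_self (by positivity) ?_
  ext i j
  fin_cases i <;> fin_cases j <;> simp [mul_apply] <;> ring

lemma Tmat_one : Tmat 1 = Smat := by
  ext i j
  fin_cases i <;> fin_cases j <;> simp [Smat, Tmat]

lemma matOpNorm_Tmat_sub_Tmat_sq {a b : ℝ} (ha : a ∈ Icc (0 : ℝ) 1) (hb : b ∈ Icc (0 : ℝ) 1) :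
    matOpNorm (Tmat a - Tmat b) ^ 2 =
      1 - (a * b + (1 - a) * (1 - b) + 2 * √(a * (1 - a)) * √(b * (1 - b))) := by
  have hTT : Tmat a - Tmat b = !![a - b, √(a * (1 - a)) - √(b * (1 - b));
      √(a * (1 - a)) - √(b * (1 - b)), -(a - b)] := by
    ext i j
    fin_cases i <;> fin_cases j <;> simp [Tmat]
  have hsa := Real.sq_sqrt (mul_nonneg ha.1 (sub_nonneg.2 ha.2))
  have hsb := Real.sq_sqrt (mul_nonneg hb.1 (sub_nonneg.2 hb.2))
  rw [hTT, matOpNorm_sq_traceless_symm]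
  linear_combination hsa + hsb

lemma matOpNorm_Smat_sub_Tmat_sq {b : ℝ} (hb : b ∈ Icc (0 : ℝ) 1) :
    matOpNorm (Smat - Tmat b) ^ 2 = 1 - b := by
  rw [← Tmat_one, matOpNorm_Tmat_sub_Tmat_sq (by simp) hb]
  simp

lemma inv_sqrt_two_sq : (√2)⁻¹ ^ 2 = (1 / 2 : ℝ) := by
  rw [inv_pow, Real.sq_sqrt zero_le_two, one_div]

lemma lt_inv_sqrt_two_iff {x : ℝ} (hx : 0 ≤ x) : x < (√2)⁻¹ ↔ x ^ 2 < 1 / 2 := by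
  rw [← inv_sqrt_two_sq, pow_lt_pow_iff_left₀ hx (by positivity) two_ne_zero]

lemma inv_sqrt_two_lt_iff {x : ℝ} (hx : 0 ≤ x) : (√2)⁻¹ < x ↔ 1 / 2 < x ^ 2 := by
  rw [← inv_sqrt_two_sq, pow_lt_pow_iff_left₀ (by positivity) hx two_ne_zero]

lemma exists_forall_near_half_overlap_gt_half {d : ℝ} (h₀ : 0 ≤ d) (h₁ : d < 1) :
    ∃ ε > 0, ε ≤ 1 / 2 ∧ ∀ b ∈ Ioo (1 / 2 - ε) (1 / 2),
      1 / 2 < d * b + (1 - d) * (1 - b) + 2 * √(d * (1 - d)) * √(b * (1 - b)) := by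
  rcases h₀.eq_or_lt with rfl | hd
  · refine ⟨1 / 2, by norm_num, le_rfl, fun b hb => ?_⟩
    simp only [zero_mul, sub_zero, one_mul, mul_zero, Real.sqrt_zero, zero_add]
    linarith [hb.2]
  · set K := √(d * (1 - d))
    have hK : 0 < K := Real.sqrt_pos.2 (mul_pos hd (sub_pos.2 h₁))
    have hε₁ := min_le_left (1 / 4 : ℝ) (K / 2)
    have hε₂ := min_le_right (1 / 4 : ℝ) (K / 2)
    refine ⟨min (1 / 4) (K / 2), by positivity, by linarith, fun b ⟨hb₁, hb₂⟩ => ?_⟩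
    have hb : 1 / 4 ≤ √(b * (1 - b)) := Real.le_sqrt_of_sq_le (by nlinarith)
    -- `d b + (1 - d)(1 - b) = 1/2 + (1/2 - b)(1 - 2d)`, and the correction is above `-K/2`
    nlinarith

theorem stmt10 (d : ℝ) (h₀ : 0 ≤ d) (h₁ : d < 1) :
    ∃ ε > 0, ∀ ε' : ℝ, 0 < ε' → ε' < ε →
      matOpNorm (Smat - Tmat (1/2 - ε')) > (Real.sqrt 2)⁻¹ ∧
      matOpNorm (Tmat d - Tmat (1/2 - ε')) < (Real.sqrt 2)⁻¹ := by
  obtain ⟨ε, hε, hε_le, hoverlap⟩ := exists_forall_near_half_overlap_gt_half h₀ h₁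
  refine ⟨ε, hε, fun ε' hε'₀ hε'ε => ?_⟩
  have hb : 1 / 2 - ε' ∈ Icc (0 : ℝ) 1 := ⟨by linarith, by linarith⟩
  constructor
  · rw [gt_iff_lt, inv_sqrt_two_lt_iff (matOpNorm_nonneg _), matOpNorm_Smat_sub_Tmat_sq hb]
    linarith
  · rw [lt_inv_sqrt_two_iff (matOpNorm_nonneg _), matOpNorm_Tmat_sub_Tmat_sq ⟨h₀, h₁.le⟩ hb]
    linarith [hoverlap (1 / 2 - ε') ⟨by linarith, by linarith⟩]
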